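/- For every admissible primitive state v = (ρ, u₁, u₂, u₃, T) with ρ > 0 and T > 0, and for any gas constants R > 0 and c_v > 0 (with c_p = c_v + R), the 5×5 matrix M(v) is symmetric positive definite. Consequently, for any scalar ν > 0 the matrix ν·M(v) is symmetric positive definite, and θᵀ (ν M(v)) θ > 0 for every nonzero θ ∈ ℝ⁵. -/

import Mathlib

open Matrix

noncomputable section

/-- The symmetric 5×5 change-of-variables Jacobian `dq/dw` expressed in primitive
variables `v = (ρ, u₁, u₂, u₃, T)`, with gas constant `R` and heat capacity at
constant pressure `cp`. -/
def Mmat (R cp ρ u₁ u₂ u₃ T : ℝ) : Matrix (Fin 5) (Fin 5) ℝ :=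
  !![ρ / R, ρ * u₁ / R, ρ * u₂ / R, ρ * u₃ / R,
       ρ * (-2 * R * T + (u₁ ^ 2 + u₂ ^ 2 + u₃ ^ 2) + 2 * T * cp) / (2 * R);
     ρ * u₁ / R, ρ * (T + u₁ ^ 2 / R), ρ * u₁ * u₂ / R, ρ * u₁ * u₃ / R,
       ρ * u₁ * ((u₁ ^ 2 + u₂ ^ 2 + u₃ ^ 2) + 2 * T * cp) / (2 * R);
     ρ * u₂ / R, ρ * u₁ * u₂ / R, ρ * (T + u₂ ^ 2 / R), ρ * u₂ * u₃ / R,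
       ρ * u₂ * ((u₁ ^ 2 + u₂ ^ 2 + u₃ ^ 2) + 2 * T * cp) / (2 * R);
     ρ * u₃ / R, ρ * u₁ * u₃ / R, ρ * u₂ * u₃ / R, ρ * (T + u₃ ^ 2 / R),
       ρ * u₃ * ((u₁ ^ 2 + u₂ ^ 2 + u₃ ^ 2) + 2 * T * cp) / (2 * R);
     ρ * (-2 * R * T + (u₁ ^ 2 + u₂ ^ 2 + u₃ ^ 2) + 2 * T * cp) / (2 * R),
       ρ * u₁ * ((u₁ ^ 2 + u₂ ^ 2 + u₃ ^ 2) + 2 * T * cp) / (2 * R),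
       ρ * u₂ * ((u₁ ^ 2 + u₂ ^ 2 + u₃ ^ 2) + 2 * T * cp) / (2 * R),
       ρ * u₃ * ((u₁ ^ 2 + u₂ ^ 2 + u₃ ^ 2) + 2 * T * cp) / (2 * R),
       ρ * ((u₁ ^ 2 + u₂ ^ 2 + u₃ ^ 2) ^ 2
            + 4 * T * cp * (-(R * T) + (u₁ ^ 2 + u₂ ^ 2 + u₃ ^ 2) + T * cp)) / (4 * R)]

/-!
Completing squares, the quadratic form of `M(v)` is
`ρ (θ₀ + u·θ' + (|u|²/2 + T c_v) θ₄)² / R + ρ T |θ' + θ₄ u|² + ρ T² c_v θ₄²`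
with `θ' = (θ₁, θ₂, θ₃)`; that is, `M(v) = Lᵀ D L` for a unit upper triangular `L` and a
diagonal `D` with positive entries, because `c_p - R = c_v > 0`.
-/

def MmatFactor (cv u₁ u₂ u₃ T : ℝ) : Matrix (Fin 5) (Fin 5) ℝ :=
  !![1, u₁, u₂, u₃, (u₁ ^ 2 + u₂ ^ 2 + u₃ ^ 2) / 2 + T * cv;
     0, 1, 0, 0, u₁;
     0, 0, 1, 0, u₂;
     0, 0, 0, 1, u₃;
     0, 0, 0, 0, 1]

def MmatWeights (R cv ρ T : ℝ) : Fin 5 → ℝ :=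
  ![ρ / R, ρ * T, ρ * T, ρ * T, ρ * T ^ 2 * cv]

lemma MmatFactor_det (cv u₁ u₂ u₃ T : ℝ) : (MmatFactor cv u₁ u₂ u₃ T).det = 1 := by
  rw [det_of_isUpperTriangular]
  · simp [MmatFactor, Fin.prod_univ_five]
  · intro i j hji
    fin_cases i <;> fin_cases j <;> simp_all [MmatFactor]

lemma MmatFactor_mulVec_injective (cv u₁ u₂ u₃ T : ℝ) :
    Function.Injective (MmatFactor cv u₁ u₂ u₃ T).mulVec := by
  rw [mulVec_injective_iff_isUnit, isUnit_iff_isUnit_det, MmatFactor_det]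
  exact isUnit_one

lemma MmatWeights_pos {R cv ρ T : ℝ} (hR : 0 < R) (hcv : 0 < cv) (hρ : 0 < ρ) (hT : 0 < T) :
    ∀ i, 0 < MmatWeights R cv ρ T i := by
  intro i
  fin_cases i <;> simp [MmatWeights] <;> positivity

lemma Mmat_eq_transpose_mul_diagonal_mul {R : ℝ} (hR : R ≠ 0) (cv ρ u₁ u₂ u₃ T : ℝ) :
    Mmat R (cv + R) ρ u₁ u₂ u₃ T =
      (MmatFactor cv u₁ u₂ u₃ T)ᵀ * diagonal (MmatWeights R cv ρ T) * MmatFactor cv u₁ u₂ u₃ T := by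
  ext i j
  fin_cases i <;> fin_cases j <;>
    simp [Mmat, MmatFactor, MmatWeights, mul_apply, Fin.sum_univ_five] <;> field_simp <;> ring

/-- for every admissible primitive state (`ρ > 0`, `T > 0`) and any
gas constants `R > 0`, `c_v > 0` (with `c_p = c_v + R`), the matrix `M(v)` is
symmetric positive definite; consequently, for any scalar `ν > 0` the matrix
`ν • M(v)` is symmetric positive definite and `θᵀ (ν M(v)) θ > 0` for every
nonzero `θ ∈ ℝ⁵`. -/
theorem Mmat_posDef
    (R cv ρ u₁ u₂ u₃ T : ℝ) (hR : 0 < R) (hcv : 0 < cv)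
    (hρ : 0 < ρ) (hT : 0 < T) :
    (Mmat R (cv + R) ρ u₁ u₂ u₃ T).IsSymm ∧
    (Mmat R (cv + R) ρ u₁ u₂ u₃ T).PosDef ∧
    ∀ ν : ℝ, 0 < ν →
      (ν • Mmat R (cv + R) ρ u₁ u₂ u₃ T).PosDef ∧
      ∀ θ : Fin 5 → ℝ, θ ≠ 0 →
        0 < θ ⬝ᵥ ((ν • Mmat R (cv + R) ρ u₁ u₂ u₃ T) *ᵥ θ) := by
  have hM : (Mmat R (cv + R) ρ u₁ u₂ u₃ T).PosDef := by
    rw [Mmat_eq_transpose_mul_diagonal_mul hR.ne', ← conjTranspose_eq_transpose_of_trivial]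
    exact (PosDef.diagonal (MmatWeights_pos hR hcv hρ hT)).conjTranspose_mul_mul_same
      (MmatFactor_mulVec_injective cv u₁ u₂ u₃ T)
  refine ⟨isHermitian_iff_isSymm.mp hM.isHermitian, hM, fun ν hν => ⟨hM.smul hν, fun θ hθ => ?_⟩⟩
  simpa using (hM.smul hν).dotProduct_mulVec_pos hθ
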